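/- The maps r commute with codegeneracies: for every integer i with 0 ≤ i ≤ N, form the (N+2)-tuple of vector spaces V'_0, …, V'_{N+1} with V'_m = V_m for m < i, V'_i = 0 (the zero vector space), and V'_m = V_{m−1} for m > i, with subsets U'_m given correspondingly (U'_i = {0}), and let c : U'_0 × ⋯ × U'_{N+1} → U_0 × ⋯ × U_N be the canonical bijection omitting the zero slot. Let σ^i : Δ^{N+1} → Δ^N be the map (t_0, …, t_{N+1}) ↦ (t_0, …, t_{i−1}, t_i + t_{i+1}, t_{i+2}, …, t_{N+1}). Then for all t ∈ Δ^{N+1} and u' ∈ U'_0 × ⋯ × U'_{N+1}: (c × c)(r^{N+1}(t, u')) = r^N(σ^i(t), c(u')), where r^{N+1} is formed for the tuple U'_0, …, U'_{N+1}. -/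

import Mathlib

universe u

/-- The map `r^n` of Definition 5.1 of Arone–Ching, for a tuple of real vector spaces:
its first tuple has `j`-th entry `(t_0 + ⋯ + t_j) • u_j` and its second tuple has `j`-th
entry `(t_{j+1} + ⋯ + t_{n-1}) • u_j` (so the last entry is `0`). -/
noncomputable def rmap {n : ℕ} (V : Fin n → ModuleCat.{u} ℝ)
    (t : Fin n → ℝ) (u : ∀ i, ↥(V i)) : (∀ i, ↥(V i)) × (∀ i, ↥(V i)) :=
  (fun k => (∑ m ∈ Finset.univ.filter (fun m => m ≤ k), t m) • u k,
   fun k => (∑ m ∈ Finset.univ.filter (fun m => k < m), t m) • u k)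

/-- The `i`-th codegeneracy map `σ^i : Δ^{N+1} → Δ^N`,
`(t_0, …, t_{N+1}) ↦ (t_0, …, t_{i-1}, t_i + t_{i+1}, t_{i+2}, …, t_{N+1})`,
written on coordinates. -/
def codegen {N : ℕ} (i : ℕ) (t : Fin (N + 2) → ℝ) (k : Fin (N + 1)) : ℝ :=
  if k.val < i then t ⟨k.val, by have := k.isLt; omega⟩
  else if k.val = i then
    t ⟨k.val, by have := k.isLt; omega⟩ + t ⟨k.val + 1, by have := k.isLt; omega⟩
  else t ⟨k.val + 1, by have := k.isLt; omega⟩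

/-- The `(N+2)`-tuple of vector spaces `V'_0, …, V'_{N+1}` obtained from `V_0, …, V_N`
by inserting the zero vector space in slot `i`: `V'_m = V_m` for `m < i`, `V'_i = 0`,
and `V'_m = V_{m-1}` for `m > i`. -/
noncomputable def Vins {N : ℕ} (V : Fin (N + 1) → ModuleCat.{u} ℝ) (i : ℕ) (hi : i ≤ N)
    (m : Fin (N + 2)) : ModuleCat.{u} ℝ :=
  if h : m.val < i then V ⟨m.val, by omega⟩
  else if m.val = i then ModuleCat.of ℝ PUnit
  else V ⟨m.val - 1, by have := m.isLt; omega⟩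

/-- The corresponding subsets `U'_m ⊆ V'_m`, with `U'_i = {0}`. -/
noncomputable def Uins {N : ℕ} (V : Fin (N + 1) → ModuleCat.{u} ℝ)
    (U : ∀ k, Set ↥(V k)) (i : ℕ) (hi : i ≤ N) (m : Fin (N + 2)) :
    Set ↥(Vins V i hi m) := by
  unfold Vins
  split_ifs with h1 h2
  · exact U ⟨m.val, by omega⟩
  · exact ({0} : Set PUnit.{u + 1})
  · exact U ⟨m.val - 1, by have := m.isLt; omega⟩

/-- The canonical bijection `c : V'_0 × ⋯ × V'_{N+1} → V_0 × ⋯ × V_N` omitting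
the zero slot. -/
noncomputable def cins {N : ℕ} (V : Fin (N + 1) → ModuleCat.{u} ℝ) (i : ℕ) (hi : i ≤ N)
    (u' : ∀ m : Fin (N + 2), ↥(Vins V i hi m)) (k : Fin (N + 1)) : ↥(V k) := by
  have hlt := k.isLt
  by_cases h : k.val < i
  · exact cast (congrArg (fun M : ModuleCat.{u} ℝ => ↥M)
      (show Vins V i hi ⟨k.val, by omega⟩ = V k from dif_pos h))
      (u' ⟨k.val, by omega⟩)
  · exact cast (congrArg (fun M : ModuleCat.{u} ℝ => ↥M)
      (show Vins V i hi ⟨k.val + 1, by omega⟩ = V k from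
        (dif_neg (show ¬(k.val + 1 < i) by omega)).trans
          (if_neg (show ¬(k.val + 1 = i) by omega))))
      (u' ⟨k.val + 1, by omega⟩)

/-!
The codegeneracy `σ^i` pushes the weights `t` forward along the degeneracy
`Fin.predAbove i : Fin (N + 2) → Fin (N + 1)`, and `c` reads slot `k` of `u'` at
`Fin.succAbove i k`. These two maps form a Galois connection,
`predAbove i m ≤ k ↔ m ≤ succAbove i k`, so every partial sum `∑_{j ≤ k} (σ^i t)_j` resp.
`∑_{j > k} (σ^i t)_j` equals `∑_{m ≤ δ} t_m` resp. `∑_{m > δ} t_m` with `δ = succAbove i k`,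
which are exactly the scalars `r^{N+1}` puts on `u'_δ = c(u')_k`.
-/

namespace Fin

lemma val_succAbove {n : ℕ} (p : Fin (n + 1)) (k : Fin n) :
    (p.succAbove k : ℕ) = if k.val < p.val then k.val else k.val + 1 := by
  unfold succAbove; split_ifs <;> simp_all [Fin.lt_def]

lemma val_predAbove {n : ℕ} (p : Fin n) (m : Fin (n + 1)) :
    (p.predAbove m : ℕ) = if p.val < m.val then m.val - 1 else m.val := by
  unfold predAbove
  split_ifs with h <;> rw [Fin.lt_def, val_castSucc] at h <;> simp <;> omega

lemma predAbove_le_iff_le_succAbove {n : ℕ} (p : Fin n) (m : Fin (n + 1)) (k : Fin n) :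
    p.predAbove m ≤ k ↔ m ≤ p.castSucc.succAbove k := by
  rw [le_def, le_def, val_predAbove, val_succAbove, val_castSucc]
  split_ifs <;> omega

lemma lt_predAbove_iff_succAbove_lt {n : ℕ} (p : Fin n) (m : Fin (n + 1)) (k : Fin n) :
    k < p.predAbove m ↔ p.castSucc.succAbove k < m := by
  simpa only [not_le] using (predAbove_le_iff_le_succAbove p m k).not

end Fin

lemma codegen_eq_sum_fiber {N : ℕ} (p : Fin (N + 1)) (t : Fin (N + 2) → ℝ) (k : Fin (N + 1)) :
    codegen p.val t k = ∑ m ∈ Finset.univ.filter (fun m => p.predAbove m = k), t m := by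
  by_cases hk : k = p
  · subst hk
    have hfib : Finset.univ.filter (fun m => k.predAbove m = k) = {k.castSucc, k.succ} := by
      ext m
      simp only [Fin.ext_iff, Fin.val_predAbove, Finset.mem_filter, Finset.mem_univ, true_and,
        Finset.mem_insert, Fin.val_castSucc, Finset.mem_singleton, Fin.val_succ]
      split_ifs <;> omega
    rw [hfib, Finset.sum_pair (Fin.castSucc_lt_succ (i := k)).ne, codegen, if_neg (lt_irrefl _), if_pos rfl]
    rfl
  · have hfib : Finset.univ.filter (fun m => p.predAbove m = k) = {p.castSucc.succAbove k} := by
      ext m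
      simp only [Fin.ext_iff, Fin.val_predAbove, Finset.mem_filter, Finset.mem_univ, true_and,
        Finset.mem_singleton, Fin.val_succAbove, Fin.val_castSucc, Fin.val_fin_lt] at hk ⊢
      split_ifs <;> omega
    rw [hfib, Finset.sum_singleton, codegen, if_neg (Fin.val_ne_of_ne hk)]
    split_ifs <;> congr 1 <;> ext <;> simp [Fin.val_succAbove] <;> omega

lemma sum_codegen {N : ℕ} (p : Fin (N + 1)) (t : Fin (N + 2) → ℝ) (S : Finset (Fin (N + 1))) :
    ∑ k ∈ S, codegen p.val t k = ∑ m ∈ Finset.univ.filter (fun m => p.predAbove m ∈ S), t m := by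
  simp_rw [codegen_eq_sum_fiber, Finset.sum_filter]
  rw [Finset.sum_comm]
  simp [Finset.sum_ite_eq]

lemma ModuleCat.cast_smul {M M' : ModuleCat.{u} ℝ} (h : M = M') (c : ℝ) (x : ↥M) :
    cast (congrArg (fun M : ModuleCat.{u} ℝ => ↥M) h) (c • x)
      = c • cast (congrArg (fun M : ModuleCat.{u} ℝ => ↥M) h) x := by
  subst h; rfl

lemma cins_smul {N : ℕ} (V : Fin (N + 1) → ModuleCat.{u} ℝ) (i : ℕ) (hi : i ≤ N)
    (s : Fin (N + 2) → ℝ) (u' : ∀ m : Fin (N + 2), ↥(Vins V i hi m)) (k : Fin (N + 1)) :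
    cins V i hi (fun m => s m • u' m) k
      = s ((⟨i, by omega⟩ : Fin (N + 2)).succAbove k) • cins V i hi u' k := by
  unfold cins
  split_ifs with h
  · rw [ModuleCat.cast_smul (show Vins V i hi ⟨k, by omega⟩ = V k by simp [Vins, h])]
    congr 2
    ext
    simp [Fin.val_succAbove, h]
  · rw [ModuleCat.cast_smul (show Vins V i hi ⟨k + 1, by omega⟩ = V k by
      simp [Vins, show ¬k.val + 1 < i by omega, show k.val + 1 ≠ i by omega])]
    congr 2
    ext
    simp [Fin.val_succAbove, h]

theorem r_commutes_with_codegeneracy_general {N : ℕ} (i : ℕ) (hi : i ≤ N)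
    (V : Fin (N + 1) → ModuleCat.{u} ℝ)
    (t : Fin (N + 2) → ℝ)
    (u' : ∀ m : Fin (N + 2), ↥(Vins V i hi m)) :
    (cins V i hi ((rmap (Vins V i hi) t u').1),
     cins V i hi ((rmap (Vins V i hi) t u').2)) =
      rmap V (codegen i t) (cins V i hi u') := by
  refine Prod.ext (funext fun k => ?_) (funext fun k => ?_)
  all_goals
    simp only [rmap]
    rw [cins_smul, sum_codegen ⟨i, Nat.lt_succ_of_le hi⟩]
    simp only [Finset.mem_filter, Finset.mem_univ, true_and, Fin.predAbove_le_iff_le_succAbove,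
      Fin.lt_predAbove_iff_succAbove_lt, Fin.castSucc_mk]

/-- The maps `r` commute with the `i`-th codegeneracy:
`(c × c)(r^{N+1}(t, u')) = r^N(σ^i(t), c(u'))` for every `t ∈ Δ^{N+1}` and every `u'`
with `u'_m ∈ U'_m`. -/
theorem r_commutes_with_codegeneracy {N : ℕ} (i : ℕ) (hi : i ≤ N)
    (V : Fin (N + 1) → ModuleCat.{u} ℝ)
    [∀ k, TopologicalSpace ↥(V k)] [∀ k, IsTopologicalAddGroup ↥(V k)]
    [∀ k, ContinuousSMul ℝ ↥(V k)] [∀ k, FiniteDimensional ℝ ↥(V k)]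
    (U : ∀ k, Set ↥(V k))
    (hU : ∀ k, ∀ c : ℝ, 0 ≤ c → ∀ v ∈ U k, c • v ∈ U k)
    (t : Fin (N + 2) → ℝ) (ht : t ∈ stdSimplex ℝ (Fin (N + 2)))
    (u' : ∀ m : Fin (N + 2), ↥(Vins V i hi m)) (hu' : ∀ m, u' m ∈ Uins V U i hi m) :
    (cins V i hi ((rmap (Vins V i hi) t u').1),
     cins V i hi ((rmap (Vins V i hi) t u').2)) =
      rmap V (codegen i t) (cins V i hi u') :=
  r_commutes_with_codegeneracy_general i hi V t u'
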